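/- Dualization of 1-truss bordisms is well-defined: if R : T ⇸ S is a 1-truss bordism, then the opposite relation Rᵒᵖ defines a 1-truss bordism S† ⇸ T† between the dual 1-trusses, and this operation is an involutive contravariant functor on the category of 1-trusses and bordisms. -/
import Mathlib


/-- The combinatorial data underlying a 1-truss needed to speak of 1-truss bordisms:
a dimension map to `{0,1}` and a (strict) total frame order `≺`. -/
structure FramedSet (α : Type*) where
  /-- the dimension of each element -/
  dim : α → Fin 2
  /-- the strict frame order `≺` -/
  flt : α → α → Prop
  flt_irrefl : ∀ a, ¬ flt a a
  flt_trans : ∀ a b c, flt a b → flt b c → flt a c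
  flt_trichotomy : ∀ a b, flt a b ∨ a = b ∨ flt b a

/-- Condition (A) for a 1-truss bordism `R : T ⇸ S`: `R` restricts to a function
on dimension-0 parts (each `t` of dimension 0 is related to exactly one `s`, which has
dimension 0) and to a cofunction on dimension-1 parts (each `s` of dimension 1 is
related to exactly one `t`, which has dimension 1). -/
def CondA {α β : Type*} (T : FramedSet α) (S : FramedSet β) (R : α → β → Prop) : Prop :=
  (∀ t, T.dim t = 0 → ∃! s, R t s) ∧
  (∀ t s, T.dim t = 0 → R t s → S.dim s = 0) ∧
  (∀ s, S.dim s = 1 → ∃! t, R t s) ∧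
  (∀ t s, S.dim s = 1 → R t s → T.dim t = 1)

/-- Condition (B) for a 1-truss bordism: whenever `R (t,s)` and `R (t',s')` both hold
for distinct pairs, then either `t ≺ t'` or `s' ≺ s`, but not both. -/
def CondB {α β : Type*} (T : FramedSet α) (S : FramedSet β) (R : α → β → Prop) : Prop :=
  ∀ t s t' s', R t s → R t' s' → (t, s) ≠ (t', s') → Xor' (T.flt t t') (S.flt s' s)

/-- A 1-truss bordism is a (Boolean) relation satisfying (A) and (B). -/
def IsBordism {α β : Type*} (T : FramedSet α) (S : FramedSet β) (R : α → β → Prop) : Prop :=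
  CondA T S R ∧ CondB T S R

/-- Composition of relations (Boolean profunctors). -/
def RelComp {α β γ : Type*} (R : α → β → Prop) (Q : β → γ → Prop) : α → γ → Prop :=
  fun t u => ∃ s, R t s ∧ Q s u

/-- The dual framed set: dimensions `0 ↔ 1` are swapped, the frame order is kept. -/
def FramedSet.dual {α : Type*} (T : FramedSet α) : FramedSet α where
  dim a := ⟨1 - (T.dim a).val, by omega⟩
  flt := T.flt
  flt_irrefl := T.flt_irrefl
  flt_trans := T.flt_trans
  flt_trichotomy := T.flt_trichotomy

/-- The opposite relation `Rᵒᵖ (s, t) := R (t, s)`. -/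
def RelOp {α β : Type*} (R : α → β → Prop) : β → α → Prop := fun s t => R t s

lemma dualdim0 {δ : Type*} (V : FramedSet δ) (a : δ) : V.dual.dim a = 0 ↔ V.dim a = 1 := by
  have hlt := (V.dim a).isLt
  constructor <;> intro h <;>
  · apply Fin.ext
    have h' := congrArg Fin.val h
    simp [FramedSet.dual] at h' ⊢
    omega

lemma dualdim1 {δ : Type*} (V : FramedSet δ) (a : δ) : V.dual.dim a = 1 ↔ V.dim a = 0 := by
  have hlt := (V.dim a).isLt
  constructor <;> intro h <;>
  · apply Fin.ext
    have h' := congrArg Fin.val h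
    simp [FramedSet.dual] at h' ⊢
    omega

/-- Dualization of 1-truss bordisms is well-defined: if `R : T ⇸ S` is a 1-truss bordism
then `Rᵒᵖ : S† ⇸ T†` is a 1-truss bordism between the dual 1-trusses, and this operation
is an involutive contravariant functor: `(Rᵒᵖ)ᵒᵖ = R` and `(R ∘ Q)ᵒᵖ = Qᵒᵖ ∘ Rᵒᵖ`. -/
theorem bordism_dual {α β γ : Type*} (T : FramedSet α) (S : FramedSet β) (U : FramedSet γ)
    (R : α → β → Prop) (Q : β → γ → Prop)
    (hR : IsBordism T S R) (hQ : IsBordism S U Q) :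
    IsBordism S.dual T.dual (RelOp R) ∧
    RelOp (RelOp R) = R ∧
    RelOp (RelComp R Q) = RelComp (RelOp Q) (RelOp R) := by
  obtain ⟨⟨hA1, hA2, hA3, hA4⟩, hB⟩ := hR
  refine ⟨⟨⟨?_, ?_, ?_, ?_⟩, ?_⟩, rfl, ?_⟩
  · intro s hs
    exact hA3 s ((dualdim0 S s).mp hs)
  · intro s t hs h
    exact (dualdim0 T t).mpr (hA4 t s ((dualdim0 S s).mp hs) h)
  · intro t ht
    exact hA1 t ((dualdim1 T t).mp ht)
  · intro s t hs h
    exact (dualdim1 S s).mpr (hA2 t s ((dualdim1 T t).mp hs) h)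
  · intro s t s' t' h h' hne
    have : (t', s') ≠ (t, s) := by
      intro he
      rw [Prod.ext_iff] at he
      exact hne (Prod.ext he.2.symm he.1.symm)
    have := hB t' s' t s h' h this
    show Xor' (S.flt s s') (T.flt t' t)
    rcases this with ⟨a, b⟩ | ⟨a, b⟩
    · exact Or.inr ⟨a, b⟩
    · exact Or.inl ⟨a, b⟩
  · funext u t
    simp only [RelOp, RelComp]
    exact propext ⟨fun ⟨s, h1, h2⟩ => ⟨s, h2, h1⟩, fun ⟨s, h1, h2⟩ => ⟨s, h2, h1⟩⟩
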